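/- arXiv:1110.2216 — 3 statements merged into one kernel-verified Lean document; each statement's English description precedes it below -/
import Mathlib

section
/- During the execution of Knuth's lightest derivation algorithm K(R) on a finite set of non-decreasing and superior rules, every weight assignment (B = w) added to S satisfies w = ℓ(B,R), and statements are expanded in non-decreasing order of ℓ(B,R). -/
open scoped ENNReal

attribute [local instance] Classical.propDecidable

/-- A lightest derivation problem given by a set of prioritized rules: each
rule `A_1,...,A_n →_g C` has a weight function `g` and a priority function
`pr`, both depending on the antecedent weights. -/
structure PLDP where
  Stmt : Type
  Rule : Type
  n : Rule → ℕ
  ant : (r : Rule) → Fin (n r) → Stmt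
  concl : Rule → Stmt
  g : (r : Rule) → (Fin (n r) → ℝ≥0∞) → ℝ≥0∞
  pr : (r : Rule) → (Fin (n r) → ℝ≥0∞) → ℝ≥0∞

namespace PLDP

/-- Derivability of a weight assignment `(B = w)` using the rules. -/
inductive Derives (P : PLDP) : P.Stmt → ℝ≥0∞ → Prop
  | step (r : P.Rule) (w : Fin (P.n r) → ℝ≥0∞)
      (hd : ∀ i, Derives P (P.ant r i) (w i)) :
      Derives P (P.concl r) (P.g r w)

/-- `ℓ(B,R)`, the infimum of the weights derivable for `B`. -/
noncomputable def ell (P : PLDP) (B : P.Stmt) : ℝ≥0∞ := sInf {w | P.Derives B w}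

/-- A state of the generic execution procedure: the set `S` of expanded weight
assignments (a partial map from statements to weights) together with the
priority queue `Q` of pending weight assignments with their priorities. -/
abbrev State (P : PLDP) :=
  (P.Stmt → Option ℝ≥0∞) × Set (P.Stmt × ℝ≥0∞ × ℝ≥0∞)

/-- The initial queue: the assignments defined by rules with no antecedents,
at the priorities given by those rules. -/
def initQ (P : PLDP) : Set (P.Stmt × ℝ≥0∞ × ℝ≥0∞) :=
  {x | ∃ (r : P.Rule) (_ : P.n r = 0) (w : Fin (P.n r) → ℝ≥0∞),
    x = (P.concl r, P.g r w, P.pr r w)}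

/-- The initial state: `S` is empty, `Q` contains the conclusions of rules
with no antecedents. -/
def init (P : PLDP) : P.State := (fun _ => none, P.initQ)

/-- The assignments derivable in a single rule step from `(B = ·)` and the
other assignments recorded in `S`, queued at the priority given by the rule. -/
def newItems (P : PLDP) (S : P.Stmt → Option ℝ≥0∞) (B : P.Stmt) :
    Set (P.Stmt × ℝ≥0∞ × ℝ≥0∞) :=
  {x | ∃ (r : P.Rule) (w : Fin (P.n r) → ℝ≥0∞),
      (∀ i, S (P.ant r i) = some (w i)) ∧ (∃ i, P.ant r i = B) ∧
      x = (P.concl r, P.g r w, P.pr r w)}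

/-- One iteration of the generic procedure: remove a minimum-priority
assignment `(B = w)` from the queue; if `B` already has a weight in `S` it is
ignored, otherwise `(B = w)` is added to `S` and every assignment derivable
from `(B = w)` and the other assignments in `S` by a single rule is inserted
into the queue at the priority specified by the rule. -/
inductive Step (P : PLDP) : P.State → P.State → Prop
  | skip (S : P.Stmt → Option ℝ≥0∞) (Q : Set (P.Stmt × ℝ≥0∞ × ℝ≥0∞))
      (B : P.Stmt) (w q : ℝ≥0∞)
      (hmem : (B, w, q) ∈ Q) (hmin : ∀ x ∈ Q, q ≤ x.2.2)
      (hold : S B ≠ none) :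
      Step P (S, Q) (S, Q \ {(B, w, q)})
  | expand (S : P.Stmt → Option ℝ≥0∞) (Q : Set (P.Stmt × ℝ≥0∞ × ℝ≥0∞))
      (B : P.Stmt) (w q : ℝ≥0∞)
      (hmem : (B, w, q) ∈ Q) (hmin : ∀ x ∈ Q, q ≤ x.2.2)
      (hnew : S B = none) :
      Step P (S, Q) (Function.update S B (some w),
        (Q \ {(B, w, q)}) ∪ P.newItems (Function.update S B (some w)) B)

/-- The states reachable by the generic execution procedure. -/
inductive Reaches (P : PLDP) : P.State → Prop
  | init : Reaches P P.init
  | step (s s' : P.State) (h : Reaches P s) (hs : P.Step s s') : Reaches P s'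

/-- The step at which a statement `B` is expanded (moved from the queue into
`S`). -/
def StepExpands (P : PLDP) (s s' : P.State) (B : P.Stmt) : Prop :=
  P.Step s s' ∧ s.1 B = none ∧ s'.1 B ≠ none

/-- A heuristic `h` is monotone if for every rule and derivable antecedent
weights `w_i`, `w_i + h(A_i) ≤ g(w_1,...,w_n) + h(C)`. -/
def MonotoneHeuristic (P : PLDP) (h : P.Stmt → ℝ≥0∞) : Prop :=
  ∀ (r : P.Rule) (w : Fin (P.n r) → ℝ≥0∞),
    (∀ i, P.Derives (P.ant r i) (w i)) →
    ∀ i, w i + h (P.ant r i) ≤ P.g r w + h (P.concl r)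

/-!
The argument is Dijkstra's. Every reachable state satisfies an invariant: expanded statements
carry their lightest derivable weight, queued assignments are derivable and queued at their
weight, and every rule whose antecedents are all expanded has its conclusion expanded or queued
at a weight no larger than the rule's. By induction on a derivation of `(B = v)`, either `B` is
expanded at weight at most `v` or some queued priority is at most `v`: if all antecedents are
expanded below their derived weights this follows from the covering clause and monotonicity,
otherwise from the induction hypothesis and superiority. Hence a statement popped at the minimal
priority `w` has no derivation lighter than `w`. Superiority also makes every newly queued
priority at least the popped one, so the minimal priority never decreases along the run, which
gives the order of expansion.
-/

variable {P : PLDP}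

def IsSuperior (P : PLDP) : Prop :=
  ∀ (r : P.Rule) (w : Fin (P.n r) → ℝ≥0∞) (i : Fin (P.n r)), w i ≤ P.g r w

def PrioritizedByWeight (P : PLDP) : Prop :=
  ∀ (r : P.Rule) (w : Fin (P.n r) → ℝ≥0∞), P.pr r w = P.g r w

def priorities (s : P.State) : Set ℝ≥0∞ := (fun x => x.2.2) '' s.2

structure Invariant (P : PLDP) (s : P.State) : Prop where
  expanded_isLeast : ∀ B w, s.1 B = some w → IsLeast {v | P.Derives B v} w
  queued_derives : ∀ B w q, (B, w, q) ∈ s.2 → q = w ∧ P.Derives B w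
  rule_covered : ∀ (r : P.Rule) (w : Fin (P.n r) → ℝ≥0∞),
    (∀ i, s.1 (P.ant r i) = some (w i)) →
    (∃ u, s.1 (P.concl r) = some u ∧ u ≤ P.g r w) ∨
    (∃ u, (P.concl r, u, u) ∈ s.2 ∧ u ≤ P.g r w)

theorem Invariant.ell_eq {s : P.State} (hs : P.Invariant s) {B : P.Stmt} {w : ℝ≥0∞}
    (h : s.1 B = some w) : P.ell B = w :=
  (hs.expanded_isLeast B w h).csInf_eq

theorem Invariant.exists_le_of_derives (hg : ∀ r : P.Rule, Monotone (P.g r))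
    (hsup : P.IsSuperior) {s : P.State} (hs : P.Invariant s) {B : P.Stmt} {v : ℝ≥0∞}
    (hd : P.Derives B v) :
    (∃ u, s.1 B = some u ∧ u ≤ v) ∨ ∃ c ∈ priorities s, c ≤ v := by
  induction hd with
  | step r w _ ih =>
    by_cases hall : ∀ i, ∃ u, s.1 (P.ant r i) = some u ∧ u ≤ w i
    · choose u hu hle using hall
      rcases hs.rule_covered r u hu with ⟨c, hc, hcle⟩ | ⟨c, hc, hcle⟩
      · exact Or.inl ⟨c, hc, hcle.trans (hg r hle)⟩
      · exact Or.inr ⟨c, ⟨_, hc, rfl⟩, hcle.trans (hg r hle)⟩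
    · push Not at hall
      obtain ⟨i, hi⟩ := hall
      rcases ih i with ⟨u, hu, hule⟩ | ⟨c, hc, hcle⟩
      · exact absurd hule (hi u hu).not_ge
      · exact Or.inr ⟨c, hc, hcle.trans (hsup r w i)⟩

theorem invariant_init (hpr : P.PrioritizedByWeight) : P.Invariant P.init where
  expanded_isLeast _ _ h := nomatch h
  queued_derives := by
    rintro B w q ⟨r, h0, w', heq⟩
    obtain ⟨rfl, rfl, rfl⟩ := Prod.ext_iff.mp heq
    exact ⟨hpr r w', .step r w' fun i => absurd i.isLt (by omega)⟩
  rule_covered r w hant := by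
    by_cases h0 : P.n r = 0
    · exact Or.inr ⟨P.g r w, ⟨r, h0, w, by rw [hpr]⟩, le_rfl⟩
    · nomatch hant ⟨0, Nat.pos_of_ne_zero h0⟩

section Step

variable {S : P.Stmt → Option ℝ≥0∞} {Q : Set (P.Stmt × ℝ≥0∞ × ℝ≥0∞)} {B : P.Stmt}
  {w q : ℝ≥0∞}

theorem Invariant.skip (hs : P.Invariant (S, Q)) (hmem : (B, w, q) ∈ Q) (hold : S B ≠ none) :
    P.Invariant (S, Q \ {(B, w, q)}) where
  expanded_isLeast := hs.expanded_isLeast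
  queued_derives B' w' q' h := hs.queued_derives B' w' q' h.1
  rule_covered r w' hant := by
    rcases hs.rule_covered r w' hant with h | ⟨u, hu, hule⟩
    · exact Or.inl h
    by_cases hx : (P.concl r, u, u) = (B, w, q)
    · simp only [Prod.mk.injEq] at hx
      obtain ⟨hC, rfl, -⟩ := hx
      obtain ⟨u₀, hu₀⟩ := Option.ne_none_iff_exists'.mp hold
      have hleast := hs.expanded_isLeast B u₀ hu₀
      refine Or.inl ⟨u₀, hC ▸ hu₀, (hleast.2 ?_).trans hule⟩
      exact (hs.queued_derives B u q hmem).2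
    · exact Or.inr ⟨u, ⟨hu, hx⟩, hule⟩

theorem Invariant.isLeast_of_min (hg : ∀ r : P.Rule, Monotone (P.g r)) (hsup : P.IsSuperior)
    (hs : P.Invariant (S, Q)) (hmem : (B, w, q) ∈ Q) (hmin : ∀ x ∈ Q, q ≤ x.2.2)
    (hnew : S B = none) : IsLeast {v | P.Derives B v} w := by
  obtain ⟨rfl, hB⟩ := hs.queued_derives B w q hmem
  refine ⟨hB, fun v hv => ?_⟩
  rcases hs.exists_le_of_derives hg hsup hv with ⟨u, hu, -⟩ | ⟨_, ⟨x, hx, rfl⟩, hle⟩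
  · exact absurd hu (by simp [hnew])
  · exact (hmin x hx).trans hle

theorem Invariant.expand (hg : ∀ r : P.Rule, Monotone (P.g r)) (hsup : P.IsSuperior)
    (hpr : P.PrioritizedByWeight) (hs : P.Invariant (S, Q)) (hmem : (B, w, q) ∈ Q)
    (hmin : ∀ x ∈ Q, q ≤ x.2.2) (hnew : S B = none) :
    P.Invariant (Function.update S B (some w),
      (Q \ {(B, w, q)}) ∪ P.newItems (Function.update S B (some w)) B) := by
  have hexp : ∀ B' u, Function.update S B (some w) B' = some u →
      IsLeast {v | P.Derives B' v} u := by
    intro B' u h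
    by_cases hB : B' = B
    · subst hB
      obtain rfl : w = u := Option.some.inj (by simpa using h)
      exact hs.isLeast_of_min hg hsup hmem hmin hnew
    · exact hs.expanded_isLeast B' u (by simpa [hB] using h)
  refine ⟨hexp, ?_, ?_⟩
  · rintro B' w' q' (⟨hx, -⟩ | ⟨r, w'', hant, -, heq⟩)
    · exact hs.queued_derives B' w' q' hx
    · obtain ⟨rfl, rfl, rfl⟩ := Prod.ext_iff.mp heq
      exact ⟨hpr r w'', .step r w'' fun i => (hexp _ _ (hant i)).1⟩
  · intro r w' hant
    by_cases hB : ∃ i, P.ant r i = B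
    · exact Or.inr ⟨P.g r w', Or.inr ⟨r, w', hant, hB, by rw [hpr]⟩, le_rfl⟩
    push Not at hB
    have hant' : ∀ i, S (P.ant r i) = some (w' i) := fun i => by
      simpa [hB i] using hant i
    rcases hs.rule_covered r w' hant' with ⟨u, hu, hule⟩ | ⟨u, hu, hule⟩
    · have hC : P.concl r ≠ B := fun h => by simp_all
      exact Or.inl ⟨u, by simpa [hC] using hu, hule⟩
    · by_cases hx : (P.concl r, u, u) = (B, w, q)
      · simp only [Prod.mk.injEq] at hx
        obtain ⟨hC, rfl, -⟩ := hx
        exact Or.inl ⟨u, by simp [hC], hule⟩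
      · exact Or.inr ⟨u, Or.inl ⟨hu, hx⟩, hule⟩

theorem lowerBounds_priorities_subset_expand (hsup : P.IsSuperior) (hpr : P.PrioritizedByWeight)
    (hs : P.Invariant (S, Q)) (hmem : (B, w, q) ∈ Q) :
    lowerBounds (priorities (S, Q)) ⊆
      lowerBounds (priorities (Function.update S B (some w),
        (Q \ {(B, w, q)}) ∪ P.newItems (Function.update S B (some w)) B)) := by
  rintro c hc _ ⟨x, hx | ⟨r, w', hant, ⟨i, hi⟩, rfl⟩, rfl⟩
  · exact hc ⟨x, hx.1, rfl⟩
  · have hwi : w' i = w := Option.some.inj (by simpa [hi] using (hant i).symm)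
    calc c ≤ q := hc ⟨_, hmem, rfl⟩
      _ = w' i := by rw [hwi, (hs.queued_derives B w q hmem).1]
      _ ≤ P.pr r w' := (hsup r w' i).trans_eq (hpr r w').symm

end Step

section Run

variable {s s' t : P.State}

theorem Invariant.step (hg : ∀ r : P.Rule, Monotone (P.g r)) (hsup : P.IsSuperior)
    (hpr : P.PrioritizedByWeight) (hs : P.Invariant s) : P.Step s s' → P.Invariant s'
  | .skip _ _ _ _ _ hmem _ hold => hs.skip hmem hold
  | .expand _ _ _ _ _ hmem hmin hnew => hs.expand hg hsup hpr hmem hmin hnew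

theorem Invariant.lowerBounds_priorities_subset (hsup : P.IsSuperior)
    (hpr : P.PrioritizedByWeight) (hs : P.Invariant s) :
    P.Step s s' → lowerBounds (priorities s) ⊆ lowerBounds (priorities s')
  | .skip _ _ _ _ _ _ _ _ => lowerBounds_mono_set (Set.image_mono Set.sdiff_subset)
  | .expand _ _ _ _ _ hmem _ _ => lowerBounds_priorities_subset_expand hsup hpr hs hmem

theorem Reaches.invariant (hg : ∀ r : P.Rule, Monotone (P.g r)) (hsup : P.IsSuperior)
    (hpr : P.PrioritizedByWeight) (h : P.Reaches s) : P.Invariant s := by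
  induction h with
  | init => exact invariant_init hpr
  | step _ _ _ hstep ih => exact ih.step hg hsup hpr hstep

theorem Reaches.of_reflTransGen (hs : P.Reaches s) (h : Relation.ReflTransGen P.Step s t) :
    P.Reaches t := by
  induction h with
  | refl => exact hs
  | tail _ hstep ih => exact .step _ _ ih hstep

theorem Reaches.lowerBounds_priorities_subset (hg : ∀ r : P.Rule, Monotone (P.g r))
    (hsup : P.IsSuperior) (hpr : P.PrioritizedByWeight) (hs : P.Reaches s)
    (h : Relation.ReflTransGen P.Step s t) :
    lowerBounds (priorities s) ⊆ lowerBounds (priorities t) := by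
  induction h with
  | refl => exact subset_rfl
  | tail hsu hstep ih =>
    have hinv := (hs.of_reflTransGen hsu).invariant hg hsup hpr
    exact ih.trans (hinv.lowerBounds_priorities_subset hsup hpr hstep)

theorem StepExpands.isLeast_priorities_ell (hg : ∀ r : P.Rule, Monotone (P.g r))
    (hsup : P.IsSuperior) (hpr : P.PrioritizedByWeight) {B : P.Stmt} (hs : P.Reaches s)
    (h : P.StepExpands s s' B) : IsLeast (priorities s) (P.ell B) := by
  obtain ⟨hstep, hnone, hsome⟩ := h
  have hinv := hs.invariant hg hsup hpr
  cases hstep with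
  | skip => exact absurd hnone hsome
  | expand S Q B₀ w q hmem hmin hnew =>
    obtain rfl : B = B₀ := by
      by_contra hB
      exact hsome (by simpa [Function.update_of_ne hB] using hnone)
    obtain ⟨rfl, -⟩ := hinv.queued_derives B w q hmem
    rw [ell, (hinv.isLeast_of_min hg hsup hmem hmin hnew).csInf_eq]
    exact ⟨⟨_, hmem, rfl⟩, fun _ ⟨x, hx, e⟩ => e ▸ hmin x hx⟩

end Run

end PLDP

theorem knuth_correct_and_in_order_general (P : PLDP)
    (hg : ∀ r : P.Rule, Monotone (P.g r))
    (hsup : ∀ (r : P.Rule) (w : Fin (P.n r) → ℝ≥0∞) (i : Fin (P.n r)),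
      w i ≤ P.g r w)
    (hpr : ∀ (r : P.Rule) (w : Fin (P.n r) → ℝ≥0∞), P.pr r w = P.g r w) :
    -- every assignment added to S is a lightest derivation weight
    (∀ s : P.State, P.Reaches s → ∀ (B : P.Stmt) (w : ℝ≥0∞),
      s.1 B = some w → w = P.ell B) ∧
    -- statements are expanded in non-decreasing order of ℓ(B,R)
    (∀ (s s' : P.State) (B : P.Stmt), P.Reaches s → P.StepExpands s s' B →
      ∀ (t t' : P.State) (B' : P.Stmt), Relation.ReflTransGen P.Step s' t →
        P.StepExpands t t' B' → P.ell B ≤ P.ell B') := by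
  refine ⟨fun s hs B w h => ((hs.invariant hg hsup hpr).ell_eq h).symm, ?_⟩
  intro s s' B hs hexp t t' B' hs't hexp'
  have hst : Relation.ReflTransGen P.Step s t := .head hexp.1 hs't
  have hell := hexp.isLeast_priorities_ell hg hsup hpr hs
  have hell' := hexp'.isLeast_priorities_ell hg hsup hpr (hs.of_reflTransGen hst)
  exact hs.lowerBounds_priorities_subset hg hsup hpr hst hell.2 hell'.1

/-- During the execution of Knuth's lightest derivation algorithm
`K(R)` (each rule prioritized at the weight of its conclusion) on a finite set
of non-decreasing and superior rules, every weight assignment `(B = w)` added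
to `S` satisfies `w = ℓ(B,R)`, and statements are expanded in non-decreasing
order of `ℓ(B,R)`. -/
theorem knuth_correct_and_in_order (P : PLDP) [Finite P.Rule]
    (hg : ∀ r : P.Rule, Monotone (P.g r))
    (hsup : ∀ (r : P.Rule) (w : Fin (P.n r) → ℝ≥0∞) (i : Fin (P.n r)),
      w i ≤ P.g r w)
    (hpr : ∀ (r : P.Rule) (w : Fin (P.n r) → ℝ≥0∞), P.pr r w = P.g r w) :
    -- every assignment added to S is a lightest derivation weight
    (∀ s : P.State, P.Reaches s → ∀ (B : P.Stmt) (w : ℝ≥0∞),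
      s.1 B = some w → w = P.ell B) ∧
    -- statements are expanded in non-decreasing order of ℓ(B,R)
    (∀ (s s' : P.State) (B : P.Stmt), P.Reaches s → P.StepExpands s s' B →
      ∀ (t t' : P.State) (B' : P.Stmt), Relation.ReflTransGen P.Step s' t →
        P.StepExpands t t' B' → P.ell B ≤ P.ell B') :=
  knuth_correct_and_in_order_general P hg hsup hpr
end

section
/- In the hierarchical A* lightest derivation algorithm, for each rule with antecedents Φ_1,...,Φ_m and conclusion Ψ, if each antecedent weight equals ℓ(Φ_i) and the conclusion weight is α, then (a) the rule's priority equals α + h(Ψ), and (b) α + h(Ψ) ≥ p(Φ_i) for every antecedent, where p(Φ) = ℓ(Φ) + h(Φ). -/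
/-! Two closure inequalities of lightest weights drive everything: `ℓ(C) ≤ v + Σ ℓ(A_i)` and
`ℓ(context(A_i)) ≤ ℓ(context(C)) + v + Σ_{j≠i} ℓ(A_j)`, obtained by plugging arbitrary
derivations of the antecedents into the rule and passing to infima, which in `ℝ≥0∞` commute with
addition. Abstraction only lowers lightest weights, because every rule has an abstract image
that is no heavier; hence `h(C) = ℓ(context(abs C)) ≤ ℓ(context(C))` and
`h(context(abs C)) = ℓ(abs C) ≤ ℓ(C)`. With the closure
inequalities, each antecedent's `ℓ + h` is then absorbed by the rule's priority. -/

open scoped ENNReal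

/-- A lightest derivation problem with additive rules: each rule
`A_1,...,A_n →_v C` assigns to the conclusion the weight `v` plus the sum of
the antecedent weights, with `v ≥ 0`. -/
structure ALDP where
  Stmt : Type
  Rule : Type
  n : Rule → ℕ
  ant : (r : Rule) → Fin (n r) → Stmt
  concl : Rule → Stmt
  v : Rule → ℝ≥0∞

namespace ALDP

/-- Derivability of a weight assignment `(B = w)`: there is a derivation tree
for `B` whose weight (sum of the weights of the rules in it) is `w`. -/
inductive Derives (P : ALDP) : P.Stmt → ℝ≥0∞ → Prop
  | step (r : P.Rule) (w : Fin (P.n r) → ℝ≥0∞)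
      (hd : ∀ i, Derives P (P.ant r i) (w i)) :
      Derives P (P.concl r) (P.v r + ∑ i, w i)

/-- `ℓ(B,R)`, the infimum of the weights derivable for `B`. -/
noncomputable def ell (P : ALDP) (B : P.Stmt) : ℝ≥0∞ := sInf {w | P.Derives B w}

/-- `CtxDerives P goal B u` : `B` has a context of weight `u`, i.e. a
derivation of `goal` with a hole that can be filled in by a derivation of `B`;
the weight of a context is the sum of the weights of the rules in it. -/
inductive CtxDerives (P : ALDP) (goal : P.Stmt) : P.Stmt → ℝ≥0∞ → Prop
  | base : CtxDerives P goal goal 0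
  | step (r : P.Rule) (i : Fin (P.n r)) (u : ℝ≥0∞) (w : Fin (P.n r) → ℝ≥0∞)
      (hc : CtxDerives P goal (P.concl r) u)
      (hd : ∀ j, j ≠ i → P.Derives (P.ant r j) (w j)) :
      CtxDerives P goal (P.ant r i) (u + P.v r + ∑ j ∈ Finset.univ.erase i, w j)

/-- `ℓ(context(B),R)`, the weight of a lightest context for `B`. -/
noncomputable def ellCtx (P : ALDP) (goal B : P.Stmt) : ℝ≥0∞ :=
  sInf {u | P.CtxDerives goal B u}

/-- `(Q, abs)` is an abstraction of `P`: for every rule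
`A_1,...,A_n →_v C` of `P` there is a rule
`abs(A_1),...,abs(A_n) →_{v'} abs(C)` of `Q` with `v' ≤ v`. -/
def IsAbstraction (P Q : ALDP) (abs : P.Stmt → Q.Stmt) : Prop :=
  ∀ r : P.Rule, ∃ r' : Q.Rule, ∃ e : Q.n r' = P.n r,
    (∀ i : Fin (P.n r), Q.ant r' (Fin.cast e.symm i) = abs (P.ant r i)) ∧
    Q.concl r' = abs (P.concl r) ∧ Q.v r' ≤ P.v r

/-- A heuristic `h` is monotone (for additive rules) if for every rule
`A_1,...,A_n →_v C` and derivable weight assignments `(A_i = w_i)`,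
`w_i + h(A_i) ≤ v + w_1 + ... + w_n + h(C)`. -/
def MonotoneHeuristic (P : ALDP) (h : P.Stmt → ℝ≥0∞) : Prop :=
  ∀ (r : P.Rule) (w : Fin (P.n r) → ℝ≥0∞),
    (∀ i, P.Derives (P.ant r i) (w i)) →
    ∀ i, w i + h (P.ant r i) ≤ P.v r + (∑ j, w j) + h (P.concl r)

end ALDP

/-- An abstraction hierarchy with `m` levels: additive lightest derivation
problems `(Σ_k, R_k)` for `0 ≤ k ≤ m-1`, goal statements `goal_k`, and
abstraction maps `abs : Σ_k → Σ_{k+1}` such that each level abstracts the one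
below and `goal_{k+1} = abs(goal_k)`.  (The most abstract level `Σ_m = {⊥}` is
represented separately below.) -/
structure Hier (m : ℕ) where
  P : Fin m → ALDP
  goal : (k : Fin m) → (P k).Stmt
  abs : (k : Fin m) → (hk : k.1 + 1 < m) → (P k).Stmt → (P ⟨k.1 + 1, hk⟩).Stmt
  hgoal : ∀ (k : Fin m) (hk : k.1 + 1 < m), goal ⟨k.1 + 1, hk⟩ = abs k hk (goal k)
  habs : ∀ (k : Fin m) (hk : k.1 + 1 < m),
    ALDP.IsAbstraction (P k) (P ⟨k.1 + 1, hk⟩) (abs k hk)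

/-- Generalized statements: statements `C ∈ Σ_k`, contexts `context(C)` for
`C ∈ Σ_k`, the most abstract statement `⊥ ∈ Σ_m`, and `context(⊥)`. -/
inductive GStmt {m : ℕ} (H : Hier m) : Type
  | stmt (k : Fin m) (C : (H.P k).Stmt)
  | ctx (k : Fin m) (C : (H.P k).Stmt)
  | bot
  | botctx

namespace Hier

variable {m : ℕ} (H : Hier m)

/-- `ℓ(Φ)`: the lightest derivation weight for statements, the lightest
context weight for contexts (at the appropriate level), and `0` for `⊥` and
`context(⊥)`. -/
noncomputable def ellG : GStmt H → ℝ≥0∞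
  | .stmt k C => (H.P k).ell C
  | .ctx k C => (H.P k).ellCtx (H.goal k) C
  | .bot => 0
  | .botctx => 0

/-- The generalized statement `context(abs(C))` for `C ∈ Σ_k`: it lives one
level up, or is `context(⊥)` if `k` is the most abstract concrete level. -/
noncomputable def absCtx (k : Fin m) (C : (H.P k).Stmt) : GStmt H :=
  if hk : k.1 + 1 < m then .ctx ⟨k.1 + 1, hk⟩ (H.abs k hk C) else .botctx

/-- The heuristic: `h(C) = ℓ(context(abs(C)))`, `h(context(C)) = ℓ(C)`, and
`h(⊥) = h(context(⊥)) = 0`. -/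
noncomputable def hG : GStmt H → ℝ≥0∞
  | .stmt k C => H.ellG (H.absCtx k C)
  | .ctx k C => (H.P k).ell C
  | .bot => 0
  | .botctx => 0

/-- The intrinsic priority `p(Φ) = ℓ(Φ) + h(Φ)`. -/
noncomputable def pG (Φ : GStmt H) : ℝ≥0∞ := H.ellG Φ + H.hG Φ

end Hier

theorem ENNReal.sInf_le_add_sum_sInf {ι : Type*} [DecidableEq ι] (s : Finset ι)
    {S : ι → Set ℝ≥0∞} {T : Set ℝ≥0∞} (c : ℝ≥0∞)
    (h : ∀ w : ι → ℝ≥0∞, (∀ i ∈ s, w i ∈ S i) → c + ∑ i ∈ s, w i ∈ T) :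
    sInf T ≤ c + ∑ i ∈ s, sInf (S i) := by
  induction s using Finset.induction_on generalizing c with
  | empty => simpa using sInf_le (h 0 (by simp))
  | insert a s ha ih =>
    rw [Finset.sum_insert ha, ← add_assoc, ENNReal.add_sInf, ENNReal.iInf_add]
    refine le_iInf fun x => ?_
    rw [ENNReal.iInf_add]
    refine le_iInf fun hx => ih (c + x) fun w hw => ?_
    have hupdate : ∀ i ∈ s, Function.update w a x i = w i := fun i hi =>
      Function.update_of_ne (ne_of_mem_of_not_mem hi ha) _ _
    have hmem := h (Function.update w a x) fun i hi => by
      rcases Finset.mem_insert.1 hi with rfl | hi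
      · simpa using hx
      · simpa [hupdate i hi] using hw i hi
    rwa [Finset.sum_insert ha, Function.update_self, Finset.sum_congr rfl hupdate,
      ← add_assoc] at hmem

theorem add_le_add_sum_of_le_add_sum_erase {ι α : Type*} [DecidableEq ι] [AddCommMonoid α]
    [PartialOrder α] [IsOrderedAddMonoid α] {s : Finset ι} {i : ι} (hi : i ∈ s) (a : ι → α)
    {x y v : α} (h : x ≤ y + v + ∑ j ∈ s.erase i, a j) :
    a i + x ≤ v + ∑ j ∈ s, a j + y := by
  rw [← Finset.add_sum_erase s a hi]
  calc a i + x ≤ a i + (y + v + ∑ j ∈ s.erase i, a j) := add_le_add_right h _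
    _ = v + (a i + ∑ j ∈ s.erase i, a j) + y := by abel

namespace ALDP

variable (P : ALDP)

theorem ell_concl_le (r : P.Rule) : P.ell (P.concl r) ≤ P.v r + ∑ i, P.ell (P.ant r i) :=
  ENNReal.sInf_le_add_sum_sInf _ _ fun w hw => Derives.step r w fun i => hw i (Finset.mem_univ i)

theorem ellCtx_self (g : P.Stmt) : P.ellCtx g g = 0 :=
  nonpos_iff_eq_zero.1 (sInf_le CtxDerives.base)

theorem ellCtx_ant_le (g : P.Stmt) (r : P.Rule) (i : Fin (P.n r)) :
    P.ellCtx g (P.ant r i) ≤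
      P.ellCtx g (P.concl r) + P.v r + ∑ j ∈ Finset.univ.erase i, P.ell (P.ant r j) := by
  rw [add_assoc, ellCtx, ellCtx, ENNReal.sInf_add]
  refine le_iInf₂ fun u hu => ?_
  rw [← add_assoc]
  exact ENNReal.sInf_le_add_sum_sInf _ _ fun w hw =>
    CtxDerives.step r i u w hu fun j hj => hw j (Finset.mem_erase.2 ⟨hj, Finset.mem_univ j⟩)

namespace IsAbstraction

variable {P} {Q : ALDP} {abs : P.Stmt → Q.Stmt}

theorem exists_rule (hA : IsAbstraction P Q abs) (r : P.Rule) :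
    ∃ r' : Q.Rule, ∃ e : Fin (Q.n r') ≃ Fin (P.n r),
      (∀ j, Q.ant r' j = abs (P.ant r (e j))) ∧ Q.concl r' = abs (P.concl r) ∧
        Q.v r' ≤ P.v r := by
  obtain ⟨r', e, hant, hconcl, hv⟩ := hA r
  exact ⟨r', finCongr e, fun j => by simpa using hant (Fin.cast e j), hconcl, hv⟩

theorem ell_concl_le (hA : IsAbstraction P Q abs) (r : P.Rule) :
    Q.ell (abs (P.concl r)) ≤ P.v r + ∑ i, Q.ell (abs (P.ant r i)) := by
  obtain ⟨r', e, hant, hconcl, hv⟩ := hA.exists_rule r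
  calc Q.ell (abs (P.concl r)) ≤ Q.v r' + ∑ j, Q.ell (Q.ant r' j) := hconcl ▸ Q.ell_concl_le r'
    _ = Q.v r' + ∑ i, Q.ell (abs (P.ant r i)) := by
      simp only [hant, e.sum_comp fun i => Q.ell (abs (P.ant r i))]
    _ ≤ _ := by gcongr

theorem ellCtx_ant_le (hA : IsAbstraction P Q abs) (g : Q.Stmt) (r : P.Rule)
    (i : Fin (P.n r)) :
    Q.ellCtx g (abs (P.ant r i)) ≤
      Q.ellCtx g (abs (P.concl r)) + P.v r +
        ∑ j ∈ Finset.univ.erase i, Q.ell (abs (P.ant r j)) := by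
  obtain ⟨r', e, hant, hconcl, hv⟩ := hA.exists_rule r
  have hsum : ∑ j ∈ Finset.univ.erase (e.symm i), Q.ell (Q.ant r' j) =
      ∑ j ∈ Finset.univ.erase i, Q.ell (abs (P.ant r j)) :=
    Finset.sum_equiv e (by simp [Equiv.eq_symm_apply, eq_comm]) fun j _ => by rw [hant]
  calc Q.ellCtx g (abs (P.ant r i)) = Q.ellCtx g (Q.ant r' (e.symm i)) := by simp [hant]
    _ ≤ Q.ellCtx g (Q.concl r') + Q.v r' +
        ∑ j ∈ Finset.univ.erase (e.symm i), Q.ell (Q.ant r' j) := Q.ellCtx_ant_le g r' _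
    _ ≤ _ := by rw [hsum, hconcl]; gcongr

theorem ell_le (hA : IsAbstraction P Q abs) (B : P.Stmt) : Q.ell (abs B) ≤ P.ell B := by
  refine le_sInf fun w hw => ?_
  induction hw with
  | step r w _ ih => exact (hA.ell_concl_le r).trans (by gcongr with i; exact ih i)

theorem ellCtx_le (hA : IsAbstraction P Q abs) (g B : P.Stmt) :
    Q.ellCtx (abs g) (abs B) ≤ P.ellCtx g B := by
  refine le_sInf fun u hu => ?_
  induction hu with
  | base => exact (Q.ellCtx_self _).le
  | step r i u w _ hd ih =>
    refine (hA.ellCtx_ant_le _ r i).trans ?_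
    gcongr with j hj
    exact (hA.ell_le _).trans (sInf_le (hd j (Finset.ne_of_mem_erase hj)))

end IsAbstraction

end ALDP

namespace Hier

variable {m : ℕ} (H : Hier m)

theorem hG_absCtx_le (k : Fin m) (B : (H.P k).Stmt) :
    H.hG (H.absCtx k B) ≤ (H.P k).ell B := by
  unfold absCtx
  split_ifs with hk
  · exact (H.habs k hk).ell_le B
  · exact zero_le

theorem ellG_absCtx_le (k : Fin m) (B : (H.P k).Stmt) :
    H.ellG (H.absCtx k B) ≤ (H.P k).ellCtx (H.goal k) B := by
  unfold absCtx
  split_ifs with hk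
  · dsimp only [ellG]
    rw [H.hgoal k hk]
    exact (H.habs k hk).ellCtx_le _ B
  · exact zero_le

theorem ellG_absCtx_ant_le (k : Fin m) (r : (H.P k).Rule) (i : Fin ((H.P k).n r)) :
    H.ellG (H.absCtx k ((H.P k).ant r i)) ≤
      H.ellG (H.absCtx k ((H.P k).concl r)) + (H.P k).v r +
        ∑ j ∈ Finset.univ.erase i, (H.P k).ell ((H.P k).ant r j) := by
  unfold absCtx
  split_ifs with hk
  · dsimp only [ellG]
    refine ((H.habs k hk).ellCtx_ant_le _ r i).trans ?_
    gcongr with j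
    exact (H.habs k hk).ell_le _
  · exact zero_le

end Hier

open Hier in
/-- HA*LD monotonicity lemma: for each HA*LD rule with
antecedents `Φ_1,...,Φ_m` and conclusion `Ψ`, if each antecedent weight equals
`ℓ(Φ_i)` and the conclusion weight is `α`, then (a) the rule's priority equals
`α + h(Ψ)`, and (b) `α + h(Ψ) ≥ p(Φ_i)` for every antecedent, where
`p(Φ) = ℓ(Φ) + h(Φ)`.  (The cases below are the BASE, UP and DOWN rules; the
START rules have no antecedents and priority `0 = 0 + h(Ψ)`.) -/
theorem hald_monotonicity (m : ℕ) (H : Hier m) :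
    -- BASE: antecedent goal_k at weight ℓ(goal_k), conclusion
    -- context(goal_k) at weight α = 0, priority ℓ(goal_k)
    (∀ k : Fin m,
      ((H.P k).ell (H.goal k) = 0 + H.hG (.ctx k (H.goal k))) ∧
      0 + H.hG (.ctx k (H.goal k)) ≥ H.pG (.stmt k (H.goal k))) ∧
    -- UP: antecedents context(abs(C)) at weight w_c = ℓ(context(abs(C))) and
    -- A_i at weight ℓ(A_i); conclusion C at weight α = v + Σ ℓ(A_i);
    -- priority α + w_c
    (∀ (k : Fin m) (r : (H.P k).Rule),
      ((H.P k).v r + (∑ i, (H.P k).ell ((H.P k).ant r i)) +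
          H.ellG (H.absCtx k ((H.P k).concl r)) =
        ((H.P k).v r + ∑ i, (H.P k).ell ((H.P k).ant r i)) +
          H.hG (.stmt k ((H.P k).concl r))) ∧
      (((H.P k).v r + ∑ i, (H.P k).ell ((H.P k).ant r i)) +
          H.hG (.stmt k ((H.P k).concl r)) ≥
        H.pG (H.absCtx k ((H.P k).concl r))) ∧
      (∀ i, ((H.P k).v r + ∑ i, (H.P k).ell ((H.P k).ant r i)) +
          H.hG (.stmt k ((H.P k).concl r)) ≥
        H.pG (.stmt k ((H.P k).ant r i)))) ∧
    -- DOWN: antecedents context(C) at weight w_c = ℓ(context(C)) and A_j at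
    -- weight ℓ(A_j); conclusion context(A_i) at weight
    -- α = v + w_c + Σ_{j≠i} ℓ(A_j); priority v + w_c + Σ_j ℓ(A_j)
    (∀ (k : Fin m) (r : (H.P k).Rule) (i : Fin ((H.P k).n r)),
      ((H.P k).v r + (H.P k).ellCtx (H.goal k) ((H.P k).concl r) +
          (∑ j, (H.P k).ell ((H.P k).ant r j)) =
        ((H.P k).v r + (H.P k).ellCtx (H.goal k) ((H.P k).concl r) +
          ∑ j ∈ Finset.univ.erase i, (H.P k).ell ((H.P k).ant r j)) +
          H.hG (.ctx k ((H.P k).ant r i))) ∧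
      ((H.P k).v r + (H.P k).ellCtx (H.goal k) ((H.P k).concl r) +
          (∑ j, (H.P k).ell ((H.P k).ant r j)) ≥
        H.pG (.ctx k ((H.P k).concl r))) ∧
      (∀ j, (H.P k).v r + (H.P k).ellCtx (H.goal k) ((H.P k).concl r) +
          (∑ j, (H.P k).ell ((H.P k).ant r j)) ≥
        H.pG (.stmt k ((H.P k).ant r j)))) := by
  refine ⟨fun k => ⟨(zero_add _).symm, ?_⟩, fun k r => ⟨rfl, ?_, fun i => ?_⟩,
    fun k r i => ⟨?_, ?_, fun j => ?_⟩⟩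
  · have hgoal : H.ellG (H.absCtx k (H.goal k)) = 0 :=
      nonpos_iff_eq_zero.1 ((H.ellG_absCtx_le k _).trans_eq ((H.P k).ellCtx_self _))
    rw [ge_iff_le, pG, hG, hgoal, zero_add, add_zero]
    rfl
  · rw [ge_iff_le, pG, hG, add_comm]
    gcongr
    exact (H.hG_absCtx_le k _).trans ((H.P k).ell_concl_le r)
  · exact add_le_add_sum_of_le_add_sum_erase (Finset.mem_univ i) _ (H.ellG_absCtx_ant_le k r i)
  · rw [← Finset.sum_erase_add _ _ (Finset.mem_univ i), ← add_assoc]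
    rfl
  · rw [ge_iff_le, pG, add_comm, add_right_comm]
    exact add_le_add_left ((H.P k).ell_concl_le r) _
  · rw [ge_iff_le, ← add_right_comm]
    exact add_le_add_sum_of_le_add_sum_erase (Finset.mem_univ j) _
      ((H.ellG_absCtx_le k _).trans ((H.P k).ellCtx_ant_le _ r j))
end

section
/- HA*LD expands at most 2K generalized statements before computing a lightest derivation of goal, where K is the number of statements C in the abstraction hierarchy with p(C) ≤ ℓ(goal). -/
open scoped ENNReal

attribute [local instance] Classical.propDecidable

/-- The rules of HA*LD: START1, START2, BASE (for each level `k`), UP (for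
each rule of `R_k`) and DOWN (for each rule of `R_k` and antecedent index). -/
inductive HRule {m : ℕ} (H : Hier m) : Type
  | start1
  | start2
  | base (k : Fin m)
  | up (k : Fin m) (r : (H.P k).Rule)
  | down (k : Fin m) (r : (H.P k).Rule) (i : Fin ((H.P k).n r))

/-- The prioritized rules `H` defining HA*LD.
START1/START2 derive `(⊥ = 0)` and `(context(⊥) = 0)` at priority `0`;
BASE derives `(context(goal_k) = 0)` from `(goal_k = w)` at priority `w`;
UP derives `(C = v + Σ w_i)` from `(context(abs(C)) = w_c)` and `(A_i = w_i)`
at priority `v + Σ w_i + w_c`;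
DOWN derives `(context(A_i) = v + w_c + Σ_{j≠i} w_j)` from
`(context(C) = w_c)` and `(A_j = w_j)` at priority `v + w_c + Σ_j w_j`. -/
noncomputable def Hier.toPLDP {m : ℕ} (H : Hier m) : PLDP where
  Stmt := GStmt H
  Rule := HRule H
  n := fun r => match r with
    | .start1 => 0
    | .start2 => 0
    | .base _ => 1
    | .up k r => (H.P k).n r + 1
    | .down k r _ => (H.P k).n r + 1
  ant := fun r => match r with
    | .start1 => Fin.elim0
    | .start2 => Fin.elim0
    | .base k => fun _ => .stmt k (H.goal k)
    | .up k r => Fin.cases (H.absCtx k ((H.P k).concl r))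
        (fun i => .stmt k ((H.P k).ant r i))
    | .down k r _ => Fin.cases (.ctx k ((H.P k).concl r))
        (fun j => .stmt k ((H.P k).ant r j))
  concl := fun r => match r with
    | .start1 => .bot
    | .start2 => .botctx
    | .base k => .ctx k (H.goal k)
    | .up k r => .stmt k ((H.P k).concl r)
    | .down k r i => .ctx k ((H.P k).ant r i)
  g := fun r => match r with
    | .start1 => fun _ => 0
    | .start2 => fun _ => 0
    | .base _ => fun _ => 0
    | .up k r => fun w => (H.P k).v r + ∑ i : Fin ((H.P k).n r), w i.succ
    | .down k r i => fun w =>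
        (H.P k).v r + w 0 + ∑ j ∈ (Finset.univ : Finset (Fin ((H.P k).n r))).erase i, w j.succ
  pr := fun r => match r with
    | .start1 => fun _ => 0
    | .start2 => fun _ => 0
    | .base _ => fun w => w 0
    | .up k r => fun w => (H.P k).v r + (∑ i : Fin ((H.P k).n r), w i.succ) + w 0
    | .down k r _ => fun w => (H.P k).v r + w 0 + ∑ j : Fin ((H.P k).n r), w j.succ

/-- `Φ` is a statement of the abstraction hierarchy (as opposed to a
context). -/
def GStmt.IsStmt {m : ℕ} {H : Hier m} : GStmt H → Prop
  | .stmt _ _ => True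
  | .bot => True
  | _ => False


/-!
Write `partner Φ` for `context(abs C)` when `Φ = C` is a statement and for `C` when
`Φ = context(C)`, so that `h(Φ) = ℓ(partner Φ)`; every HA*LD rule queues its conclusion at
priority `g + c` with `c` a derivable weight of the partner. While `goal` is unexpanded, let `q`
be the least queued priority. Every unexpanded `Φ` then satisfies `q ≤ w + c` for all derivable
weights `w` of `Φ` and `c` of `partner Φ`: follow a derivation of `Φ` down to an expandable
rule instance, using the monotonicity of the heuristic, and, when it is the abstract context
that is missing, move one level up; this is an induction from the most abstract level down.
Taking `Φ = goal` gives `q ≤ ℓ(goal)`, and taking the conclusion of the popped item shows that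
expanded weights are lightest, so every expanded `Φ` has `p(Φ) ≤ q ≤ ℓ(goal)`. Expanded
statements are thus among the `K`, and since `p(C) ≤ p(context(C))`, so are the statements of
the expanded contexts.
-/

lemma Fin.sum_univ_erase_cast {M : Type*} [AddCommMonoid M] {n n' : ℕ} (e : n' = n) (i : Fin n)
    (f : Fin n → M) :
    ∑ j ∈ Finset.univ.erase (Fin.cast e.symm i), f (Fin.cast e j) =
      ∑ j ∈ Finset.univ.erase i, f j := by
  subst e
  rfl

namespace ALDP

namespace IsAbstraction

variable {P Q : ALDP} {abs : P.Stmt → Q.Stmt}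

lemma exists_derives_concl (hPQ : IsAbstraction P Q abs) (r : P.Rule)
    {w : Fin (P.n r) → ℝ≥0∞} (hw : ∀ i, Q.Derives (abs (P.ant r i)) (w i)) :
    ∃ v ≤ P.v r, Q.Derives (abs (P.concl r)) (v + ∑ i, w i) := by
  obtain ⟨r', e, hant, hconcl, hv⟩ := hPQ r
  refine ⟨Q.v r', hv, ?_⟩
  rw [← Fin.sum_congr' w e, ← hconcl]
  exact .step r' _ fun j => hant (Fin.cast e j) ▸ hw _

lemma exists_ctxDerives_ant (hPQ : IsAbstraction P Q abs) (r : P.Rule) (i : Fin (P.n r))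
    {goal : Q.Stmt} {u : ℝ≥0∞} {w : Fin (P.n r) → ℝ≥0∞}
    (hu : Q.CtxDerives goal (abs (P.concl r)) u)
    (hw : ∀ j, j ≠ i → Q.Derives (abs (P.ant r j)) (w j)) :
    ∃ v ≤ P.v r, Q.CtxDerives goal (abs (P.ant r i))
      (u + v + ∑ j ∈ Finset.univ.erase i, w j) := by
  obtain ⟨r', e, hant, hconcl, hv⟩ := hPQ r
  refine ⟨Q.v r', hv, ?_⟩
  rw [← Fin.sum_univ_erase_cast e i w, ← hant i]
  refine .step r' _ u _ (hconcl ▸ hu) fun j hj => hant (Fin.cast e j) ▸ hw _ ?_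
  rintro rfl
  exact hj rfl

lemma exists_derives_le (hPQ : IsAbstraction P Q abs) {C : P.Stmt} {w : ℝ≥0∞}
    (h : P.Derives C w) : ∃ w' ≤ w, Q.Derives (abs C) w' := by
  induction h with
  | step r w _ ih =>
    choose w' hw'le hw' using ih
    obtain ⟨v, hv, hd⟩ := hPQ.exists_derives_concl r hw'
    exact ⟨_, add_le_add hv (Finset.sum_le_sum fun i _ => hw'le i), hd⟩

lemma exists_ctxDerives_le (hPQ : IsAbstraction P Q abs) {goal C : P.Stmt} {u : ℝ≥0∞}
    (h : P.CtxDerives goal C u) : ∃ u' ≤ u, Q.CtxDerives (abs goal) (abs C) u' := by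
  induction h with
  | base => exact ⟨0, le_rfl, .base⟩
  | step r i u w _ hd ih =>
    obtain ⟨u', hu'le, hu'⟩ := ih
    have hw' : ∀ j, ∃ w', j ≠ i → w' ≤ w j ∧ Q.Derives (abs (P.ant r j)) w' := fun j => by
      by_cases hj : j = i
      · exact ⟨0, fun h => (h hj).elim⟩
      · obtain ⟨w', hle, hd'⟩ := hPQ.exists_derives_le (hd j hj)
        exact ⟨w', fun _ => ⟨hle, hd'⟩⟩
    choose w' hw' using hw'
    obtain ⟨v, hv, hc⟩ := hPQ.exists_ctxDerives_ant r i hu' fun j hj => (hw' j hj).2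
    refine ⟨_, ?_, hc⟩
    gcongr with j hj
    exact (hw' j (Finset.ne_of_mem_erase hj)).1

/-- Monotonicity of the heuristic `C ↦ ℓ(context(abs C))`. -/
lemma exists_ctxDerives_ant_add_le (hPQ : IsAbstraction P Q abs) (r : P.Rule)
    {goal : Q.Stmt} {c : ℝ≥0∞} (hc : Q.CtxDerives goal (abs (P.concl r)) c)
    {w : Fin (P.n r) → ℝ≥0∞} (hw : ∀ j, P.Derives (P.ant r j) (w j)) (i : Fin (P.n r)) :
    ∃ c', Q.CtxDerives goal (abs (P.ant r i)) c' ∧ w i + c' ≤ P.v r + ∑ j, w j + c := by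
  choose w' hw'le hw' using fun j => hPQ.exists_derives_le (hw j)
  obtain ⟨v, hv, hc'⟩ := hPQ.exists_ctxDerives_ant r i hc fun j _ => hw' j
  refine ⟨_, hc', ?_⟩
  calc w i + (c + v + ∑ j ∈ Finset.univ.erase i, w' j)
      ≤ w i + (c + P.v r + ∑ j ∈ Finset.univ.erase i, w j) := by
        gcongr with j
        exact hw'le j
    _ = P.v r + ∑ j, w j + c := by
        rw [← Finset.add_sum_erase _ w (Finset.mem_univ i)]; ring

end IsAbstraction

end ALDP

namespace Hier

variable {m : ℕ} (H : Hier m)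

def DerG : GStmt H → ℝ≥0∞ → Prop
  | .stmt k C, w => (H.P k).Derives C w
  | .ctx k C, u => (H.P k).CtxDerives (H.goal k) C u
  | .bot, w => w = 0
  | .botctx, u => u = 0

noncomputable def partner : GStmt H → GStmt H
  | .stmt k C => H.absCtx k C
  | .ctx k C => .stmt k C
  | .bot => .botctx
  | .botctx => .botctx

variable {H}

lemma ellG_le_of_derG {Φ : GStmt H} {w : ℝ≥0∞} (h : H.DerG Φ w) : H.ellG Φ ≤ w := by
  cases Φ with
  | stmt k C => exact sInf_le h
  | ctx k C => exact sInf_le h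
  | bot | botctx => exact (zero_le : (0 : ℝ≥0∞) ≤ w)

lemma hG_eq_ellG_partner (Φ : GStmt H) : H.hG Φ = H.ellG (H.partner Φ) := by
  cases Φ <;> rfl

lemma pG_eq_ellG_add_ellG_partner (Φ : GStmt H) :
    H.pG Φ = H.ellG Φ + H.ellG (H.partner Φ) := by
  rw [pG, hG_eq_ellG_partner]

lemma absCtx_of_lt {k : Fin m} (hk : k.1 + 1 < m) (C : (H.P k).Stmt) :
    H.absCtx k C = .ctx ⟨k.1 + 1, hk⟩ (H.abs k hk C) := dif_pos hk

lemma absCtx_of_not_lt {k : Fin m} (hk : ¬ k.1 + 1 < m) (C : (H.P k).Stmt) :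
    H.absCtx k C = .botctx := dif_neg hk

lemma derG_absCtx_goal (k : Fin m) : H.DerG (H.absCtx k (H.goal k)) 0 := by
  by_cases hk : k.1 + 1 < m
  · rw [absCtx_of_lt hk]
    exact H.hgoal k hk ▸ ALDP.CtxDerives.base
  · rw [absCtx_of_not_lt hk]
    rfl

lemma exists_derG_absCtx_le {k : Fin m} {C : (H.P k).Stmt} {u : ℝ≥0∞}
    (h : (H.P k).CtxDerives (H.goal k) C u) : ∃ u' ≤ u, H.DerG (H.absCtx k C) u' := by
  by_cases hk : k.1 + 1 < m
  · rw [absCtx_of_lt hk]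
    show ∃ u' ≤ u, (H.P _).CtxDerives (H.goal _) _ u'
    rw [H.hgoal k hk]
    exact (H.habs k hk).exists_ctxDerives_le h
  · exact ⟨0, zero_le, by rw [absCtx_of_not_lt hk]; rfl⟩

lemma exists_derG_partner_absCtx_le {k : Fin m} {C : (H.P k).Stmt} {w : ℝ≥0∞}
    (h : (H.P k).Derives C w) : ∃ w' ≤ w, H.DerG (H.partner (H.absCtx k C)) w' := by
  by_cases hk : k.1 + 1 < m
  · rw [absCtx_of_lt hk]
    exact (H.habs k hk).exists_derives_le h
  · exact ⟨0, zero_le, by rw [absCtx_of_not_lt hk]; rfl⟩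

lemma exists_derG_absCtx_ant_add_le {k : Fin m} (r : (H.P k).Rule) {c : ℝ≥0∞}
    (hc : H.DerG (H.absCtx k ((H.P k).concl r)) c) {w : Fin ((H.P k).n r) → ℝ≥0∞}
    (hw : ∀ j, (H.P k).Derives ((H.P k).ant r j) (w j)) (i : Fin ((H.P k).n r)) :
    ∃ c', H.DerG (H.absCtx k ((H.P k).ant r i)) c' ∧
      w i + c' ≤ (H.P k).v r + ∑ j, w j + c := by
  by_cases hk : k.1 + 1 < m
  · rw [absCtx_of_lt hk] at hc ⊢
    exact (H.habs k hk).exists_ctxDerives_ant_add_le r hc hw i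
  · refine ⟨0, by rw [absCtx_of_not_lt hk]; rfl, ?_⟩
    calc w i + 0 ≤ ∑ j, w j := by
          rw [add_zero]; exact Finset.single_le_sum (fun _ _ => zero_le) (Finset.mem_univ i)
      _ ≤ (H.P k).v r + ∑ j, w j + c := le_add_right le_add_self

lemma pG_stmt_le_pG_ctx (k : Fin m) (C : (H.P k).Stmt) :
    H.pG (.stmt k C) ≤ H.pG (.ctx k C) := by
  rw [pG, pG, add_comm (H.ellG (.ctx k C))]
  refine add_le_add le_rfl ?_
  exact le_sInf fun u hu => (exists_derG_absCtx_le hu).elim fun u' ⟨hle, hu'⟩ =>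
    (ellG_le_of_derG hu').trans hle

end Hier

namespace Hier

variable {m : ℕ} {H : Hier m}

lemma derG_concl (r : H.toPLDP.Rule) {u : Fin (H.toPLDP.n r) → ℝ≥0∞}
    (hu : ∀ i, H.DerG (H.toPLDP.ant r i) (u i)) :
    H.DerG (H.toPLDP.concl r) (H.toPLDP.g r u) := by
  cases r with
  | start1 | start2 => rfl
  | base k => exact ALDP.CtxDerives.base
  | up k r => exact ALDP.Derives.step r _ fun i => hu i.succ
  | down k r i =>
    have h := ALDP.CtxDerives.step r i _ _ (hu (0 : Fin ((H.P k).n r + 1)))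
      fun (j : Fin ((H.P k).n r)) _ => hu j.succ
    rwa [add_comm (u (0 : Fin ((H.P k).n r + 1)))] at h

lemma exists_derG_partner_pr_eq (r : H.toPLDP.Rule) {u : Fin (H.toPLDP.n r) → ℝ≥0∞}
    (hu : ∀ i, H.DerG (H.toPLDP.ant r i) (u i)) :
    ∃ c, H.DerG (H.partner (H.toPLDP.concl r)) c ∧ H.toPLDP.pr r u = H.toPLDP.g r u + c := by
  cases r with
  | start1 | start2 => exact ⟨0, rfl, (zero_add 0).symm⟩
  | base k => exact ⟨u (0 : Fin 1), hu (0 : Fin 1), (zero_add _).symm⟩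
  | up k r => exact ⟨u (0 : Fin ((H.P k).n r + 1)), hu (0 : Fin ((H.P k).n r + 1)), rfl⟩
  | down k r i =>
    refine ⟨u i.succ, hu i.succ, ?_⟩
    show _ + _ + ∑ j : Fin ((H.P k).n r), u j.succ =
      _ + _ + ∑ j ∈ Finset.univ.erase i, u j.succ + _
    rw [← Finset.add_sum_erase _ _ (Finset.mem_univ i)]
    ring

lemma pG_concl_le_pr (r : H.toPLDP.Rule) {u : Fin (H.toPLDP.n r) → ℝ≥0∞}
    (hu : ∀ i, H.DerG (H.toPLDP.ant r i) (u i)) :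
    H.pG (H.toPLDP.concl r) ≤ H.toPLDP.pr r u := by
  obtain ⟨c, hc, hpr⟩ := exists_derG_partner_pr_eq r hu
  calc H.pG (H.toPLDP.concl r)
      = H.ellG (H.toPLDP.concl r) + H.ellG (H.partner (H.toPLDP.concl r)) :=
        pG_eq_ellG_add_ellG_partner _
    _ ≤ H.toPLDP.g r u + c := add_le_add (ellG_le_of_derG (derG_concl r hu)) (ellG_le_of_derG hc)
    _ = H.toPLDP.pr r u := hpr.symm

end Hier

namespace PLDP

variable (P : PLDP)

def QueueSupported (S : P.Stmt → Option ℝ≥0∞) (Q : Set (P.Stmt × ℝ≥0∞ × ℝ≥0∞)) : Prop :=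
  ∀ x ∈ Q, ∃ (r : P.Rule) (w : Fin (P.n r) → ℝ≥0∞),
    (∀ i, S (P.ant r i) = some (w i)) ∧ x = (P.concl r, P.g r w, P.pr r w)

def Closed (S : P.Stmt → Option ℝ≥0∞) (Q : Set (P.Stmt × ℝ≥0∞ × ℝ≥0∞)) : Prop :=
  ∀ (r : P.Rule) (w : Fin (P.n r) → ℝ≥0∞), (∀ i, S (P.ant r i) = some (w i)) →
    S (P.concl r) ≠ none ∨ (P.concl r, P.g r w, P.pr r w) ∈ Q

variable {P} {S : P.Stmt → Option ℝ≥0∞} {Q : Set (P.Stmt × ℝ≥0∞ × ℝ≥0∞)}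
  {B : P.Stmt} {w q : ℝ≥0∞}

lemma update_eq_some_of_eq_none {Φ : P.Stmt} {v : ℝ≥0∞} (hB : S B = none)
    (h : S Φ = some v) : Function.update S B (some w) Φ = some v := by
  rw [Function.update_of_ne]
  · exact h
  · rintro rfl
    simp_all

lemma update_eq_some_iff {Φ : P.Stmt} {v : ℝ≥0∞} :
    Function.update S B (some w) Φ = some v ↔ (Φ = B ∧ w = v) ∨ (Φ ≠ B ∧ S Φ = some v) := by
  by_cases hΦ : Φ = B
  · simp [hΦ]
  · simp [hΦ]

lemma update_ne_none_of_ne_none {Φ : P.Stmt} (h : S Φ ≠ none) :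
    Function.update S B (some w) Φ ≠ none := by
  by_cases hΦ : Φ = B
  · simp [hΦ]
  · rwa [Function.update_of_ne hΦ]

lemma Step.stored_of_stored {s s' : P.State} (h : P.Step s s') {Φ : P.Stmt} {v : ℝ≥0∞}
    (hΦ : s.1 Φ = some v) : s'.1 Φ = some v := by
  cases h with
  | skip => exact hΦ
  | expand _ _ _ _ _ _ _ hnew => exact update_eq_some_of_eq_none hnew hΦ

lemma le_pr_of_closed (hcl : P.Closed S Q) (hmin : ∀ x ∈ Q, q ≤ x.2.2) {r : P.Rule}
    {u : Fin (P.n r) → ℝ≥0∞} (hu : ∀ i, S (P.ant r i) = some (u i))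
    (hnone : S (P.concl r) = none) : q ≤ P.pr r u :=
  (hcl r u hu).elim (fun h => (h hnone).elim) (hmin _)

lemma Closed.diff_singleton (h : P.Closed S Q) (hB : S B ≠ none) :
    P.Closed S (Q \ {(B, w, q)}) := by
  intro r u hu
  rcases h r u hu with hS | hQ
  · exact .inl hS
  · by_cases hx : P.concl r = B
    · exact .inl (by rwa [hx])
    · exact .inr ⟨hQ, fun h => hx (Prod.mk.inj h).1⟩

lemma Closed.update (h : P.Closed S Q) :
    P.Closed (Function.update S B (some w))
      ((Q \ {(B, w, q)}) ∪ P.newItems (Function.update S B (some w)) B) := by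
  intro r u hu
  by_cases hB : ∃ i, P.ant r i = B
  · exact .inr (.inr ⟨r, u, hu, hB, rfl⟩)
  · have hu' : ∀ i, S (P.ant r i) = some (u i) := fun i => by
      rw [← hu i, Function.update_of_ne fun h => hB ⟨i, h⟩]
    rcases h r u hu' with hS | hQ
    · exact .inl (update_ne_none_of_ne_none hS)
    · by_cases hx : P.concl r = B
      · exact .inl (by simp [hx])
      · exact .inr (.inl ⟨hQ, fun h => hx (Prod.mk.inj h).1⟩)

lemma Reaches.closed {s : P.State} (h : P.Reaches s) : P.Closed s.1 s.2 := by
  induction h with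
  | init =>
    intro r u hu
    have h0 : P.n r = 0 := Nat.eq_zero_of_not_pos fun hpos => by simpa [PLDP.init] using hu ⟨0, hpos⟩
    exact .inr ⟨r, h0, u, rfl⟩
  | step _ _ _ hs ih =>
    cases hs with
    | skip _ _ _ _ _ _ _ hold => exact ih.diff_singleton hold
    | expand => exact ih.update

lemma Reaches.queueSupported {s : P.State} (h : P.Reaches s) :
    P.QueueSupported s.1 s.2 := by
  induction h with
  | init =>
    rintro x ⟨r, h0, u, rfl⟩
    exact ⟨r, u, fun i => (Fin.cast h0 i).elim0, rfl⟩
  | step _ _ _ hs ih =>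
    cases hs with
    | skip => exact fun x hx => ih x hx.1
    | expand _ _ _ _ _ _ _ hnew =>
      rintro x (⟨hx, -⟩ | ⟨r, u, hu, -, rfl⟩)
      · obtain ⟨r, u, hu, rfl⟩ := ih x hx
        exact ⟨r, u, fun i => update_eq_some_of_eq_none hnew (hu i), rfl⟩
      · exact ⟨r, u, hu, rfl⟩

lemma Reaches.stored_sound (D : P.Stmt → ℝ≥0∞ → Prop)
    (hD : ∀ r w, (∀ i, D (P.ant r i) (w i)) → D (P.concl r) (P.g r w))
    {s : P.State} (h : P.Reaches s) : ∀ Φ v, s.1 Φ = some v → D Φ v := by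
  induction h with
  | init => simp [PLDP.init]
  | step _ _ hr hs ih =>
    cases hs with
    | skip => exact ih
    | expand S Q B w q hmem =>
      intro Φ v hΦ
      rcases update_eq_some_iff.1 hΦ with ⟨rfl, rfl⟩ | ⟨-, hΦ⟩
      · obtain ⟨r, u, hu, hx⟩ := hr.queueSupported _ hmem
        cases hx
        exact hD r u fun i => ih _ _ (hu i)
      · exact ih Φ v hΦ

end PLDP

namespace Hier

variable {m : ℕ} {H : Hier m}

def Optimal (S : GStmt H → Option ℝ≥0∞) : Prop :=
  ∀ Φ v, S Φ = some v → ∀ w, H.DerG Φ w → v ≤ w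

def StoredOrAbove (S : GStmt H → Option ℝ≥0∞) (q : ℝ≥0∞) (Φ : GStmt H) : Prop :=
  ∀ w c, H.DerG Φ w → H.DerG (H.partner Φ) c → S Φ ≠ none ∨ q ≤ w + c

section Frontier

variable {S : GStmt H → Option ℝ≥0∞} {Q : Set (GStmt H × ℝ≥0∞ × ℝ≥0∞)} {q : ℝ≥0∞}
  (hcl : H.toPLDP.Closed S Q) (hopt : Optimal S) (hmin : ∀ x ∈ Q, q ≤ x.2.2)
include hcl hmin

lemma storedOrAbove_bot : StoredOrAbove S q .bot := fun _ _ _ _ => by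
  by_cases h : S .bot = none
  · exact .inr ((PLDP.le_pr_of_closed (r := .start1) (u := Fin.elim0) hcl hmin (fun i => i.elim0) h).trans zero_le)
  · exact .inl h

lemma storedOrAbove_botctx : StoredOrAbove S q .botctx := fun _ _ _ _ => by
  by_cases h : S .botctx = none
  · exact .inr ((PLDP.le_pr_of_closed (r := .start2) (u := Fin.elim0) hcl hmin (fun i => i.elim0) h).trans zero_le)
  · exact .inl h

include hopt

lemma storedOrAbove_stmt (k : Fin m) (habs : ∀ C, StoredOrAbove S q (H.absCtx k C))
    (C : (H.P k).Stmt) : StoredOrAbove S q (.stmt k C) := by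
  intro w c (hw : (H.P k).Derives C w) hc
  induction hw generalizing c with
  | step r w hd ih =>
    by_cases hS : S (.stmt k ((H.P k).concl r)) = none
    swap
    · exact .inl hS
    refine .inr ?_
    by_cases hant : ∃ i, S (.stmt k ((H.P k).ant r i)) = none
    · obtain ⟨i, hi⟩ := hant
      obtain ⟨c', hc', hle⟩ := exists_derG_absCtx_ant_add_le r hc hd i
      exact ((ih i c' hc').resolve_left (not_not.2 hi)).trans hle
    push Not at hant
    choose sv hsv using fun i => Option.ne_none_iff_exists'.1 (hant i)
    by_cases habsS : S (H.absCtx k ((H.P k).concl r)) = none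
    · obtain ⟨w', hw'le, hw'⟩ := exists_derG_partner_absCtx_le (ALDP.Derives.step r w hd)
      calc q ≤ c + w' := (habs _ c w' hc hw').resolve_left (not_not.2 habsS)
        _ ≤ (H.P k).v r + ∑ i, w i + c := by rw [add_comm c]; gcongr
    · obtain ⟨u, hu⟩ := Option.ne_none_iff_exists'.1 habsS
      have hstored : ∀ x, S (H.toPLDP.ant (.up k r) x) =
          some (Fin.cases (motive := fun _ => ℝ≥0∞) u sv x) :=
        Fin.cases hu fun i => (hsv i)
      calc q ≤ H.toPLDP.pr (.up k r) (Fin.cases u sv) := PLDP.le_pr_of_closed hcl hmin hstored hS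
        _ = (H.P k).v r + ∑ i, sv i + u := rfl
        _ ≤ (H.P k).v r + ∑ i, w i + c := by
          gcongr with i
          · exact hopt _ _ (hsv i) _ (hd i)
          · exact hopt _ _ hu _ hc

lemma le_of_stored_ctx_concl (k : Fin m) (hst : ∀ C, StoredOrAbove S q (.stmt k C))
    {r : (H.P k).Rule} (i : Fin ((H.P k).n r)) {u u' : ℝ≥0∞} {w : Fin ((H.P k).n r) → ℝ≥0∞}
    (hc : (H.P k).CtxDerives (H.goal k) ((H.P k).concl r) u)
    (hu' : S (.ctx k ((H.P k).concl r)) = some u')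
    (hw : ∀ j, (H.P k).Derives ((H.P k).ant r j) (w j))
    (hS : S (.ctx k ((H.P k).ant r i)) = none) :
    q ≤ u + ((H.P k).v r + ∑ j, w j) := by
  by_cases hant : ∃ j, S (.stmt k ((H.P k).ant r j)) = none
  · obtain ⟨j, hj⟩ := hant
    obtain ⟨ua, hua_le, hua⟩ := exists_derG_absCtx_le hc
    obtain ⟨c, hc, hle⟩ := exists_derG_absCtx_ant_add_le r hua hw j
    calc q ≤ w j + c := (hst _ _ _ (hw j) hc).resolve_left (not_not.2 hj)
      _ ≤ (H.P k).v r + ∑ j, w j + ua := hle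
      _ ≤ (H.P k).v r + ∑ j, w j + u := by gcongr
      _ = u + ((H.P k).v r + ∑ j, w j) := add_comm _ _
  push Not at hant
  choose sv hsv using fun j => Option.ne_none_iff_exists'.1 (hant j)
  have hstored : ∀ x, S (H.toPLDP.ant (.down k r i) x) =
      some (Fin.cases (motive := fun _ => ℝ≥0∞) u' sv x) :=
    Fin.cases hu' hsv
  calc q ≤ H.toPLDP.pr (.down k r i) (Fin.cases u' sv) :=
        PLDP.le_pr_of_closed hcl hmin hstored hS
    _ = (H.P k).v r + u' + ∑ j, sv j := rfl
    _ ≤ (H.P k).v r + u + ∑ j, w j := by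
      gcongr with j
      · exact hopt _ _ hu' _ hc
      · exact hopt _ _ (hsv j) _ (hw j)
    _ = u + ((H.P k).v r + ∑ j, w j) := by ring

lemma storedOrAbove_ctx (k : Fin m) (hst : ∀ C, StoredOrAbove S q (.stmt k C))
    (C : (H.P k).Stmt) : StoredOrAbove S q (.ctx k C) := by
  intro u wC (hu : (H.P k).CtxDerives (H.goal k) C u) (hwC : (H.P k).Derives C wC)
  induction hu generalizing wC with
  | base =>
    by_cases hS : S (.ctx k (H.goal k)) = none
    swap
    · exact .inl hS
    refine .inr ?_
    rcases hst (H.goal k) wC 0 hwC (derG_absCtx_goal k) with hg | hq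
    · obtain ⟨s, hs⟩ := Option.ne_none_iff_exists'.1 hg
      calc q ≤ H.toPLDP.pr (.base k) (fun _ => s) :=
            PLDP.le_pr_of_closed hcl hmin (fun _ => hs) hS
        _ ≤ wC := hopt _ _ hs _ hwC
        _ = 0 + wC := (zero_add _).symm
    · rwa [add_zero, ← zero_add wC] at hq
  | step r i u w hc hd ih =>
    by_cases hS : S (.ctx k ((H.P k).ant r i)) = none
    swap
    · exact .inl hS
    refine .inr ?_
    have hW : ∀ j, (H.P k).Derives ((H.P k).ant r j) (Function.update w i wC j) := fun j => by
      rcases eq_or_ne j i with rfl | hj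
      · simpa using hwC
      · simpa [hj] using hd j hj
    suffices q ≤ u + ((H.P k).v r + ∑ j, Function.update w i wC j) by
      rwa [Finset.sum_update_of_mem (Finset.mem_univ i), Finset.sdiff_singleton_eq_erase,
        add_comm wC, ← add_assoc, ← add_assoc] at this
    rcases ih _ (ALDP.Derives.step r _ hW) with hc' | hq
    · obtain ⟨u', hu'⟩ := Option.ne_none_iff_exists'.1 hc'
      exact le_of_stored_ctx_concl hcl hopt hmin k hst i hc hu' hW hS
    · exact hq

lemma storedOrAbove_level (k : Fin m) :
    (∀ C, StoredOrAbove S q (.stmt k C)) ∧ ∀ C, StoredOrAbove S q (.ctx k C) := by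
  have habs : ∀ C, StoredOrAbove S q (H.absCtx k C) := fun C => by
    by_cases hk : k.1 + 1 < m
    · rw [absCtx_of_lt hk]
      exact (storedOrAbove_level ⟨k.1 + 1, hk⟩).2 _
    · rw [absCtx_of_not_lt hk]
      exact storedOrAbove_botctx hcl hmin
  have hst := storedOrAbove_stmt hcl hopt hmin k habs
  exact ⟨hst, storedOrAbove_ctx hcl hopt hmin k hst⟩
termination_by m - k.1

lemma storedOrAbove (Φ : GStmt H) : StoredOrAbove S q Φ := by
  cases Φ with
  | stmt k C => exact (storedOrAbove_level hcl hopt hmin k).1 C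
  | ctx k C => exact (storedOrAbove_level hcl hopt hmin k).2 C
  | bot => exact storedOrAbove_bot hcl hmin
  | botctx => exact storedOrAbove_botctx hcl hmin

end Frontier

end Hier

namespace Hier

variable {m : ℕ} {H : Hier m}

lemma derG_of_reaches {s : H.toPLDP.State} (hs : H.toPLDP.Reaches s) :
    ∀ Φ v, s.1 Φ = some v → H.DerG Φ v :=
  hs.stored_sound H.DerG fun r _ hu => derG_concl r hu

section Pop

variable {S : GStmt H → Option ℝ≥0∞} {Q : Set (GStmt H × ℝ≥0∞ × ℝ≥0∞)} {q : ℝ≥0∞}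
  (hcl : H.toPLDP.Closed S Q) (hopt : Optimal S) (hmin : ∀ x ∈ Q, q ≤ x.2.2)
include hcl hopt hmin

lemma le_ell_goal (k : Fin m) (hgoal : S (.stmt k (H.goal k)) = none) :
    q ≤ (H.P k).ell (H.goal k) :=
  le_sInf fun w hw => by
    simpa using ((storedOrAbove hcl hopt hmin (.stmt k (H.goal k))) w 0 hw
      (derG_absCtx_goal k)).resolve_left (not_not.2 hgoal)

lemma pG_le_and_optimal_of_pop (k : Fin m) (hL : (H.P k).ell (H.goal k) ≠ ⊤)
    (hgoal : S (.stmt k (H.goal k)) = none) (hQ : H.toPLDP.QueueSupported S Q)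
    (hsound : ∀ Φ v, S Φ = some v → H.DerG Φ v) {B : GStmt H} {wB : ℝ≥0∞}
    (hmem : (B, wB, q) ∈ Q) (hnew : S B = none) :
    H.pG B ≤ (H.P k).ell (H.goal k) ∧ ∀ w, H.DerG B w → wB ≤ w := by
  have hqL := le_ell_goal hcl hopt hmin k hgoal
  obtain ⟨r, u, hu, hx⟩ := hQ _ hmem
  cases hx
  have hDu : ∀ i, H.DerG (H.toPLDP.ant r i) (u i) := fun i => hsound _ _ (hu i)
  refine ⟨(pG_concl_le_pr r hDu).trans hqL, fun w hw => ?_⟩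
  obtain ⟨c, hc, hpr⟩ := exists_derG_partner_pr_eq r hDu
  have hq : H.toPLDP.g r u + c ≤ w + c :=
    hpr ▸ ((storedOrAbove hcl hopt hmin _) w c hw hc).resolve_left (not_not.2 hnew)
  have hc_top : c ≠ ⊤ := ne_top_of_le_ne_top hL (le_add_self.trans (hpr ▸ hqL))
  exact ENNReal.le_of_add_le_add_right hc_top hq

end Pop

theorem optimal_and_pG_le_of_reaches (k : Fin m) (hL : (H.P k).ell (H.goal k) ≠ ⊤)
    {s : H.toPLDP.State} (hs : H.toPLDP.Reaches s) :
    s.1 (.stmt k (H.goal k)) = none →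
      Optimal s.1 ∧ ∀ Φ, s.1 Φ ≠ none → H.pG Φ ≤ (H.P k).ell (H.goal k) := by
  induction hs with
  | init => exact fun _ => ⟨by simp [Optimal, PLDP.init], by simp [PLDP.init]⟩
  | step s s' hr hstep ih =>
    intro hgoal'
    have hgoal : s.1 (.stmt k (H.goal k)) = none := by
      rcases hv : s.1 (.stmt k (H.goal k)) with _ | v
      · rfl
      · simp [hstep.stored_of_stored hv] at hgoal'
    obtain ⟨hopt, hpG⟩ := ih hgoal
    cases hstep with
    | skip => exact ⟨hopt, hpG⟩
    | expand S Q B wB q hmem hmin hnew =>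
      obtain ⟨hpGB, hoptB⟩ := pG_le_and_optimal_of_pop hr.closed hopt hmin k hL hgoal
        hr.queueSupported (derG_of_reaches hr) hmem hnew
      refine ⟨fun Φ v hΦ => ?_, fun Φ hΦ => ?_⟩
      · rcases (PLDP.update_eq_some_iff (P := H.toPLDP)).1 hΦ with ⟨rfl, rfl⟩ | ⟨-, hΦ⟩
        · exact hoptB
        · exact hopt Φ v hΦ
      · obtain ⟨v, hv⟩ := Option.ne_none_iff_exists'.1 hΦ
        rcases (PLDP.update_eq_some_iff (P := H.toPLDP)).1 hv with ⟨rfl, -⟩ | ⟨-, hv⟩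
        · exact hpGB
        · exact hpG Φ (by simp [hv])

lemma pG_le_of_reaches (k : Fin m) {s : H.toPLDP.State} (hs : H.toPLDP.Reaches s)
    (hgoal : s.1 (.stmt k (H.goal k)) = none) {Φ : GStmt H} (hΦ : s.1 Φ ≠ none) :
    H.pG Φ ≤ (H.P k).ell (H.goal k) := by
  by_cases hL : (H.P k).ell (H.goal k) = ⊤
  · exact hL ▸ le_top
  · exact (optimal_and_pG_le_of_reaches k hL hs hgoal).2 Φ hΦ

end Hier

def GStmt.toCtx {m : ℕ} {H : Hier m} : GStmt H → GStmt H
  | .stmt k C | .ctx k C => .ctx k C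
  | .bot | .botctx => .botctx

lemma Hier.setOf_pG_le_subset {m : ℕ} (H : Hier m) (a : ℝ≥0∞) :
    {Φ | H.pG Φ ≤ a} ⊆
      {Φ | Φ.IsStmt ∧ H.pG Φ ≤ a} ∪ GStmt.toCtx '' {Φ | Φ.IsStmt ∧ H.pG Φ ≤ a} := by
  intro Φ hΦ
  cases Φ with
  | stmt | bot => exact .inl ⟨trivial, hΦ⟩
  | ctx k C => exact .inr ⟨.stmt k C, ⟨trivial, (H.pG_stmt_le_pG_ctx k C).trans hΦ⟩, rfl⟩
  | botctx => exact .inr ⟨.bot, ⟨trivial, by simp [pG, ellG, hG]⟩, rfl⟩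

/-- HA*LD expands at most `2K` generalized statements before
computing a lightest derivation of `goal`, where `K` is the number of
statements `C` in the abstraction hierarchy with `p(C) ≤ ℓ(goal)`: at any
reachable state of the execution in which `goal` has not yet been expanded,
the number of expanded generalized statements is at most `2K`. -/
theorem hald_expands_at_most_2K (m : ℕ) (hm : 0 < m) (H : Hier m)
    (hK : {Φ : GStmt H | Φ.IsStmt ∧
      H.pG Φ ≤ (H.P ⟨0, hm⟩).ell (H.goal ⟨0, hm⟩)}.Finite) :
    ∀ s : (H.toPLDP).State, (H.toPLDP).Reaches s →
      s.1 (.stmt ⟨0, hm⟩ (H.goal ⟨0, hm⟩)) = none →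
      {Φ : GStmt H | s.1 Φ ≠ none}.ncard ≤
        2 * {Φ : GStmt H | Φ.IsStmt ∧
          H.pG Φ ≤ (H.P ⟨0, hm⟩).ell (H.goal ⟨0, hm⟩)}.ncard := by
  intro s hs hgoal
  set T := {Φ : GStmt H | Φ.IsStmt ∧ H.pG Φ ≤ (H.P ⟨0, hm⟩).ell (H.goal ⟨0, hm⟩)}
  have hsub : {Φ : GStmt H | s.1 Φ ≠ none} ⊆ T ∪ GStmt.toCtx '' T :=
    fun Φ hΦ => H.setOf_pG_le_subset _ (Hier.pG_le_of_reaches _ hs hgoal hΦ)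
  calc {Φ : GStmt H | s.1 Φ ≠ none}.ncard ≤ (T ∪ GStmt.toCtx '' T).ncard :=
        Set.ncard_le_ncard hsub (hK.union (hK.image _))
    _ ≤ T.ncard + (GStmt.toCtx '' T).ncard := Set.ncard_union_le _ _
    _ ≤ 2 * T.ncard := by linarith [Set.ncard_image_le (f := GStmt.toCtx) hK]
end
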